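/- Let ν ∈ [-1/2,∞)^n and define ρ_ν(x) = (1/16) min{1/|x|, 1, x_j : j ∈ J_ν} for x ∈ (0,∞)^n, where J_ν = {j : ν_j > -1/2}. Then for every x ∈ (0,∞)^n and every y ∈ (0,∞)^n with |y - x| < 4ρ_ν(x), one has (1/2)ρ_ν(x) ≤ ρ_ν(y) ≤ 2ρ_ν(x). -/
import Mathlib


open Real Set

/-- The critical function `ρ_ν` associated with the Laguerre operator:
`ρ_ν(x) = (1/16) · min({1/|x|, 1} ∪ {x_j : ν_j > -1/2})`. -/
noncomputable def rhoNu {n : ℕ} (ν : Fin n → ℝ) (x : EuclideanSpace ℝ (Fin n)) : ℝ :=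
  (1 / 16) * sInf (({1 / ‖x‖, 1} : Set ℝ) ∪ (fun j => x j) '' {j | ν j > -(1 / 2)})

lemma coord_abs_le_norm {n : ℕ} (z : EuclideanSpace ℝ (Fin n)) (j : Fin n) :
    |z j| ≤ ‖z‖ := by
  rw [EuclideanSpace.norm_eq]
  calc |z j| = Real.sqrt ((z j) ^ 2) := (Real.sqrt_sq_eq_abs _).symm
    _ ≤ Real.sqrt (∑ i, ‖z i‖ ^ 2) := by
        apply Real.sqrt_le_sqrt
        have h := Finset.single_le_sum (f := fun i => ‖z i‖ ^ 2)
          (fun i _ => sq_nonneg _) (Finset.mem_univ j)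
        simpa [Real.norm_eq_abs, sq_abs] using h

theorem stmt0 {n : ℕ} (ν : Fin n → ℝ) (hν : ∀ j, -(1 / 2 : ℝ) ≤ ν j)
    (x y : EuclideanSpace ℝ (Fin n)) (hx : ∀ i, 0 < x i) (hy : ∀ i, 0 < y i)
    (hxy : ‖y - x‖ < 4 * rhoNu ν x) :
    (1 / 2) * rhoNu ν x ≤ rhoNu ν y ∧ rhoNu ν y ≤ 2 * rhoNu ν x := by
  classical
  set J : Set (Fin n) := {j | ν j > -(1 / 2)} with hJ
  set S : EuclideanSpace ℝ (Fin n) → Set ℝ :=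
    fun z => ({1 / ‖z‖, 1} : Set ℝ) ∪ (fun j => z j) '' J with hS
  have hSfin : ∀ z, (S z).Finite := fun z =>
    ((Set.finite_singleton _).insert _).union ((Set.toFinite J).image _)
  have hSne : ∀ z, (S z).Nonempty := fun z => ⟨1, by left; right; rfl⟩
  have hSbdd : ∀ z, BddBelow (S z) := fun z => (hSfin z).bddBelow
  have hrho : ∀ z, rhoNu ν z = (1 / 16) * sInf (S z) := fun z => rfl
  -- dispatch the degenerate case ‖x‖ = 0
  by_cases hnx : ‖x‖ = 0
  · exfalso
    have h0 : (0 : ℝ) ∈ S x := by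
      left; left; simp [hnx]
    have hle : sInf (S x) ≤ 0 := csInf_le (hSbdd x) h0
    have hge : (0:ℝ) ≤ sInf (S x) := by
      apply le_csInf (hSne x)
      rintro b (hb | ⟨j, hj, rfl⟩)
      · rcases hb with rfl | hb
        · positivity
        · rw [Set.mem_singleton_iff] at hb; rw [hb]; norm_num
      · exact (hx j).le
    have : rhoNu ν x = 0 := by rw [hrho]; nlinarith
    rw [this] at hxy
    have := norm_nonneg (y - x)
    linarith
  have hxpos : 0 < ‖x‖ := lt_of_le_of_ne (norm_nonneg x) (Ne.symm hnx)
  set r := sInf (S x) with hr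
  have hrmem : r ∈ S x := (hSne x).csInf_mem (hSfin x)
  have hrpos : 0 < r := by
    rcases hrmem with hb | ⟨j, hj, hjx⟩
    · rcases hb with hb | hb
      · rw [hb]; positivity
      · rw [Set.mem_singleton_iff] at hb; rw [hb]; norm_num
    · rw [← hjx]; exact hx j
  have hr1 : r ≤ 1 := csInf_le (hSbdd x) (by left; right; rfl)
  have hrinv : r ≤ 1 / ‖x‖ := csInf_le (hSbdd x) (by left; left; rfl)
  have hrj : ∀ j ∈ J, r ≤ x j := fun j hj => csInf_le (hSbdd x) (Or.inr ⟨j, hj, rfl⟩)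
  have hrx : rhoNu ν x = (1/16) * r := rfl
  rw [hrx] at hxy
  have hd : ‖y - x‖ < r / 4 := by linarith
  have hny : 0 < ‖y‖ := by
    rcases Nat.eq_zero_or_pos n with h0 | h0
    · exfalso; subst h0
      have : x = 0 := Subsingleton.elim x 0
      rw [this, norm_zero] at hxpos; exact lt_irrefl 0 hxpos
    · have hj0 : 0 < y ⟨0, h0⟩ := hy _
      have : y ≠ 0 := by
        intro h; rw [h] at hj0; simp at hj0
      exact norm_pos_iff.mpr this
  have hcoord : ∀ j : Fin n, |y j - x j| ≤ ‖y - x‖ := by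
    intro j
    have := coord_abs_le_norm (y - x) j
    simpa using this
  have hnyx : ‖y‖ ≤ ‖x‖ + ‖y - x‖ := by
    have := norm_add_le (y - x) x; simp at this; linarith
  have hnxy : ‖x‖ - ‖y - x‖ ≤ ‖y‖ := by
    have := norm_sub_norm_le x y
    have h2 : ‖x - y‖ = ‖y - x‖ := norm_sub_rev x y
    linarith
  have hrxn : r * ‖x‖ ≤ 1 := (le_div_iff₀ hxpos).mp hrinv
  constructor
  · -- lower bound: every element of S y is ≥ r/2
    rw [hrho y, hrx]
    have : r / 2 ≤ sInf (S y) := by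
      apply le_csInf (hSne y)
      rintro b (hb | ⟨j, hj, rfl⟩)
      · rcases hb with rfl | hb
        · rw [le_div_iff₀ hny]
          have h1 : ‖y‖ ≤ ‖x‖ + r / 4 := by linarith
          nlinarith
        · rw [Set.mem_singleton_iff] at hb; rw [hb]; linarith
      · have h1 : r ≤ x j := hrj j hj
        have h2 : |y j - x j| ≤ ‖y - x‖ := hcoord j
        have h3 : x j - y j ≤ |y j - x j| := by
          rw [abs_sub_comm]; exact le_abs_self _
        show r / 2 ≤ y j
        linarith
    linarith
  · -- upper bound
    rw [hrho y, hrx]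
    have : sInf (S y) ≤ 2 * r := by
      rcases hrmem with hb | ⟨j, hj, hjx⟩
      · rcases hb with hb | hb
        · -- r = 1/‖x‖, hence ‖x‖ ≥ 1
          have hx1 : 1 ≤ ‖x‖ := by
            rw [hb] at hr1
            rw [div_le_one hxpos] at hr1; exact hr1
          have hy2 : ‖x‖ / 2 ≤ ‖y‖ := by linarith
          have hmem : 1 / ‖y‖ ∈ S y := by left; left; rfl
          calc sInf (S y) ≤ 1 / ‖y‖ := csInf_le (hSbdd y) hmem
            _ ≤ 2 * (1 / ‖x‖) := by
                rw [show 2 * (1 / ‖x‖) = 2 / ‖x‖ by ring,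
                  div_le_div_iff₀ hny hxpos]
                linarith
            _ = 2 * r := by rw [hb]
        · -- r = 1
          rw [Set.mem_singleton_iff] at hb
          have hmem : (1:ℝ) ∈ S y := by left; right; rfl
          calc sInf (S y) ≤ 1 := csInf_le (hSbdd y) hmem
            _ ≤ 2 * r := by linarith
      · -- r = x j
        have hmem : y j ∈ S y := Or.inr ⟨j, hj, rfl⟩
        have h2 : |y j - x j| ≤ ‖y - x‖ := hcoord j
        have h3 : y j - x j ≤ |y j - x j| := le_abs_self _
        calc sInf (S y) ≤ y j := csInf_le (hSbdd y) hmem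
          _ ≤ x j + r / 4 := by linarith
          _ ≤ 2 * r := by
              have : x j = r := hjx
              rw [this]; linarith
    linarith
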